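/- For the deformed world function σ_d(x,y) = σ_M(x,y) + d·sgn(σ_M(x,y)) with d > 0 in 1+1-dimensional Minkowski space, the timelike segment T[P₀P₁] = {R : √(2σ_d(P₀,R)) + √(2σ_d(R,P₁)) = √(2σ_d(P₀,P₁)), σ_d(P₀,R) ≥ 0, σ_d(R,P₁) ≥ 0} between timelike separated points P₀, P₁ contains points not lying on the affine line through P₀ and P₁; i.e., the segment has nonzero thickness. -/
import Mathlib


/-- World function of 1+1 dimensional Minkowski space (c = 1). -/
noncomputable def sigmaM (x y : ℝ × ℝ) : ℝ := ((x.1 - y.1) ^ 2 - (x.2 - y.2) ^ 2) / 2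

/-- Deformed Minkowski world function. -/
noncomputable def sigmaD (d : ℝ) (x y : ℝ × ℝ) : ℝ :=
  sigmaM x y + d * Real.sign (sigmaM x y)

theorem deformed_timelike_segment_has_thickness (d : ℝ) (hd : 0 < d) :
    ∃ P₀ P₁ : ℝ × ℝ, 0 < sigmaM P₀ P₁ ∧
      ∃ R : ℝ × ℝ,
        (Real.sqrt (2 * sigmaD d P₀ R) + Real.sqrt (2 * sigmaD d R P₁)
            = Real.sqrt (2 * sigmaD d P₀ P₁) ∧
          0 ≤ sigmaD d P₀ R ∧ 0 ≤ sigmaD d R P₁) ∧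
        ∀ t : ℝ, R ≠ (1 - t) • P₀ + t • P₁ := by
  set L : ℝ := Real.sqrt (8 * d) with hL
  set e : ℝ := Real.sqrt (3 * d / 2) with he
  have hL2 : L ^ 2 = 8 * d := Real.sq_sqrt (by linarith)
  have he2 : e ^ 2 = 3 * d / 2 := Real.sq_sqrt (by linarith)
  have hepos : 0 < e := Real.sqrt_pos.mpr (by linarith)
  refine ⟨(0, 0), (L, 0), ?_, (L / 2, e), ⟨?_, ?_, ?_⟩, ?_⟩
  · show (0 : ℝ) < ((0 - L) ^ 2 - (0 - 0) ^ 2) / 2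
    nlinarith
  · have h1 : sigmaM (0, 0) (L / 2, e) = d / 4 := by
      simp only [sigmaM]; nlinarith
    have h2 : sigmaM (L / 2, e) (L, 0) = d / 4 := by
      simp only [sigmaM]; nlinarith
    have h3 : sigmaM ((0 : ℝ), (0 : ℝ)) (L, 0) = 4 * d := by
      simp only [sigmaM]; nlinarith
    have hs1 : Real.sign (d / 4) = 1 := Real.sign_of_pos (by linarith)
    have hs3 : Real.sign (4 * d) = 1 := Real.sign_of_pos (by linarith)
    rw [sigmaD, sigmaD, sigmaD, h1, h2, h3, hs1, hs3]
    have key : ∀ x : ℝ, 0 ≤ x → Real.sqrt x + Real.sqrt x = Real.sqrt (4 * x) := by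
      intro x hx
      rw [Real.sqrt_mul (by norm_num : (0:ℝ) ≤ 4), show Real.sqrt 4 = 2 by
        rw [show (4 : ℝ) = 2 ^ 2 by norm_num, Real.sqrt_sq (by norm_num)]]
      ring
    have : 2 * (4 * d + d * 1) = 4 * (2 * (d / 4 + d * 1)) := by ring
    rw [this]
    exact key _ (by linarith)
  · have h1 : sigmaM (0, 0) (L / 2, e) = d / 4 := by
      simp only [sigmaM]; nlinarith
    rw [sigmaD, h1, Real.sign_of_pos (by linarith : (0:ℝ) < d / 4)]
    linarith
  · have h2 : sigmaM (L / 2, e) (L, 0) = d / 4 := by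
      simp only [sigmaM]; nlinarith
    rw [sigmaD, h2, Real.sign_of_pos (by linarith : (0:ℝ) < d / 4)]
    linarith
  · intro t h
    have h2 := congrArg Prod.snd h
    simp [Prod.snd] at h2
    exact absurd h2 (ne_of_gt hepos)
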